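/- arXiv:math/0605205 — 3 statements merged into one kernel-verified Lean document; each statement's English description precedes it below -/
import Mathlib

section
/- Let F be harmonic and bounded on the open strip Σ₀ = {z ∈ ℂ : 0 < Im z < π}, continuous on the closed strip Σ, with boundary values f₁ on ℝ and f₂ on ℝ + iπ. If τ ∈ ℝ satisfies sup_{x∈ℝ} |f₁(x+τ) − f₁(x)| < ε and sup_{x∈ℝ} |f₂(x+iπ+τ) − f₂(x+iπ)| < ε, then sup_{z∈Σ} |F(z+τ) − F(z)| ≤ ε. Consequently, if f₁ and f₂ are almost periodic, F is almost periodic on every horizontal line in Σ. -/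
/-!
The difference `G z = F (z + τ) - F z` is bounded, continuous and harmonic on the strip, and of
modulus less than `ε` on both edges. Rotating `G z₀` onto the positive real axis by a unimodular
`c`, it suffices to bound `re (c * G)` by `ε`. This is a Phragmén–Lindelöf argument: for `δ > 0`,
`re (c * G) - δ * re (cosh ((z - iπ/2) / 2))` obeys the maximum principle on the rectangles
`(-R, R) × (0, π)`, and on their vertical sides it is `≤ ε` once `R` is large, because the barrier
grows like `exp (R / 2)` while `G` stays bounded; then let `δ → 0`.
-/

open Complex

/-- A complex-valued function is harmonic on a set if near each point of the set it is
the sum of a holomorphic function and the conjugate of a holomorphic function. -/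
def HarmonicOnSet (F : ℂ → ℂ) (s : Set ℂ) : Prop :=
  ∀ z ∈ s, ∃ (U : Set ℂ) (g h : ℂ → ℂ), IsOpen U ∧ z ∈ U ∧ U ⊆ s ∧
    DifferentiableOn ℂ g U ∧ DifferentiableOn ℂ h U ∧
    ∀ w ∈ U, F w = g w + (starRingEnd ℂ) (h w)

open Set Filter Topology Bornology

namespace HarmonicOnSet

variable {F G : ℂ → ℂ} {s t : Set ℂ}

theorem mono (hF : HarmonicOnSet F s) (ht : IsOpen t) (hts : t ⊆ s) : HarmonicOnSet F t := by
  intro z hz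
  obtain ⟨U, g, h, hU, hzU, -, hg, hh, hFU⟩ := hF z (hts hz)
  exact ⟨U ∩ t, g, h, hU.inter ht, ⟨hzU, hz⟩, inter_subset_right, hg.mono inter_subset_left,
    hh.mono inter_subset_left, fun w hw => hFU w hw.1⟩

theorem sub (hF : HarmonicOnSet F s) (hG : HarmonicOnSet G s) :
    HarmonicOnSet (fun z => F z - G z) s := by
  intro z hz
  obtain ⟨U, g, h, hU, hzU, hUs, hg, hh, hFU⟩ := hF z hz
  obtain ⟨V, g', h', hV, hzV, -, hg', hh', hGV⟩ := hG z hz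
  refine ⟨U ∩ V, g - g', h - h', hU.inter hV, ⟨hzU, hzV⟩, inter_subset_left.trans hUs,
    (hg.mono inter_subset_left).sub (hg'.mono inter_subset_right),
    (hh.mono inter_subset_left).sub (hh'.mono inter_subset_right), fun w hw => ?_⟩
  simp only [Pi.sub_apply, hFU w hw.1, hGV w hw.2, map_sub]
  ring

theorem const_mul (hF : HarmonicOnSet F s) (c : ℂ) : HarmonicOnSet (fun z => c * F z) s := by
  intro z hz
  obtain ⟨U, g, h, hU, hzU, hUs, hg, hh, hFU⟩ := hF z hz
  refine ⟨U, fun w => c * g w, fun w => starRingEnd ℂ c * h w, hU, hzU, hUs, hg.const_mul c,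
    hh.const_mul _, fun w hw => ?_⟩
  simp [hFU w hw, mul_add]

theorem comp_add_const (hF : HarmonicOnSet F s) (a : ℂ) :
    HarmonicOnSet (fun z => F (z + a)) ((· + a) ⁻¹' s) := by
  intro z hz
  obtain ⟨U, g, h, hU, hzU, hUs, hg, hh, hFU⟩ := hF (z + a) hz
  have hmaps : MapsTo (· + a) ((· + a) ⁻¹' U) U := fun _ hw => hw
  exact ⟨(· + a) ⁻¹' U, fun w => g (w + a), fun w => h (w + a),
    hU.preimage (continuous_add_const a), hzU, preimage_mono hUs,
    hg.comp (differentiableOn_id.add_const a) hmaps,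
    hh.comp (differentiableOn_id.add_const a) hmaps, fun w hw => hFU _ hw⟩

theorem _root_.DifferentiableOn.harmonicOnSet (hs : IsOpen s) (hF : DifferentiableOn ℂ F s) :
    HarmonicOnSet F s :=
  fun z hz => ⟨s, F, 0, hs, hz, subset_rfl, hF, differentiableOn_const 0, fun w _ => by simp⟩

theorem re_eventually_eq_of_isLocalMax (hF : HarmonicOnSet F s) {z : ℂ} (hz : z ∈ s)
    (hmax : IsLocalMax (fun w => (F w).re) z) : ∀ᶠ w in 𝓝 z, (F w).re = (F z).re := by
  obtain ⟨U, g, h, hU, hzU, -, hg, hh, hFU⟩ := hF z hz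
  have hUz : U ∈ 𝓝 z := hU.mem_nhds hzU
  -- `exp (g + h)` is holomorphic with modulus `exp (re F)`: the maximum modulus principle applies
  have hnorm : ∀ w ∈ U, ‖cexp (g w + h w)‖ = Real.exp (F w).re := by
    intro w hw
    simp [norm_exp, hFU w hw]
  have hd : ∀ᶠ w in 𝓝 z, DifferentiableAt ℂ (fun w => cexp (g w + h w)) w := by
    filter_upwards [hUz] with w hw
    exact ((hg.add hh).cexp w hw).differentiableAt (hU.mem_nhds hw)
  have hmax' : IsLocalMax (norm ∘ fun w => cexp (g w + h w)) z := by
    filter_upwards [hmax, hUz] with w hw hwU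
    simpa only [Function.comp, hnorm w hwU, hnorm z hzU, Real.exp_le_exp] using hw
  filter_upwards [norm_eventually_eq_of_isLocalMax hd hmax', hUz] with w hw hwU
  rwa [hnorm w hwU, hnorm z hzU, Real.exp_eq_exp] at hw

theorem re_le_of_forall_mem_frontier_re_le (hF : HarmonicOnSet F s) (hs : IsBounded s)
    (hc : ContinuousOn F (closure s)) {C : ℝ} (hC : ∀ z ∈ frontier s, (F z).re ≤ C) {z : ℂ}
    (hz : z ∈ closure s) : (F z).re ≤ C := by
  have hK : IsCompact (closure s) := hs.isCompact_closure
  have hre : ContinuousOn (fun w => (F w).re) (closure s) := continuous_re.comp_continuousOn hc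
  obtain ⟨w, hw, hwmax⟩ := hK.exists_isMaxOn ⟨z, hz⟩ hre
  refine (hwmax hz).trans (not_lt.1 fun hCm => ?_)
  -- A maximum point with the largest real part cannot be interior.
  set S := closure s ∩ (fun w => (F w).re) ⁻¹' {(F w).re}
  have hS : IsCompact S := hK.of_isClosed_subset
    (hre.preimage_isClosed_of_isClosed isClosed_closure isClosed_singleton) inter_subset_left
  obtain ⟨p, ⟨hp, hpm⟩, hpmax⟩ := hS.exists_isMaxOn ⟨w, hw, rfl⟩ continuous_re.continuousOn
  rw [mem_preimage, mem_singleton_iff] at hpm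
  have hp_int : s ∈ 𝓝 p := by
    rw [closure_eq_interior_union_frontier] at hp
    refine mem_interior_iff_mem_nhds.1 (hp.resolve_right fun hpf => ?_)
    exact (hC p hpf).not_gt (hpm ▸ hCm)
  have hp_max : IsLocalMax (fun w => (F w).re) p := by
    filter_upwards [hp_int] with q hq
    exact hpm ▸ hwmax (subset_closure hq)
  have hS_nhds : ∀ᶠ q in 𝓝 p, q ∈ S := by
    filter_upwards [hF.re_eventually_eq_of_isLocalMax (mem_of_mem_nhds hp_int) hp_max, hp_int]
      with q hq hqs
    exact ⟨subset_closure hqs, hq.trans hpm⟩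
  have hshift : Tendsto (fun t : ℝ => p + t) (𝓝[>] 0) (𝓝 p) :=
    ((continuous_const.add continuous_ofReal).tendsto' 0 p (by simp)).mono_left
      nhdsWithin_le_nhds
  obtain ⟨t, htS, ht⟩ := ((hshift.eventually hS_nhds).and self_mem_nhdsWithin).exists
  have hle : p.re + t ≤ p.re := by simpa using hpmax htS
  linarith

end HarmonicOnSet

theorem Real.tendsto_cosh_atTop : Tendsto Real.cosh atTop atTop := by
  refine tendsto_atTop_mono (fun x => ?_) (Real.tendsto_exp_atTop.atTop_div_const two_pos)
  rw [Real.cosh_eq]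
  linarith [Real.exp_pos (-x)]

/-- Phragmén–Lindelöf barrier for the strip `0 ≤ im z ≤ π`: there its real part is positive and
grows like `exp (|re z| / 2)`. -/
noncomputable def stripBarrier (z : ℂ) : ℂ := cosh ((z - Real.pi / 2 * I) / 2)

theorem differentiable_stripBarrier : Differentiable ℂ stripBarrier :=
  differentiable_cosh.comp ((differentiable_id.sub_const _).div_const 2)

theorem stripBarrier_re (z : ℂ) :
    (stripBarrier z).re = Real.cosh (z.re / 2) * Real.cos ((z.im - Real.pi / 2) / 2) := by
  have h : (z - Real.pi / 2 * I) / 2 = ↑(z.re / 2) + ↑((z.im - Real.pi / 2) / 2) * I := by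
    apply Complex.ext <;> simp
  rw [stripBarrier, h, cosh_add, cosh_mul_I, sinh_mul_I, ← ofReal_cosh, ← ofReal_cos,
    ← ofReal_sinh, ← ofReal_sin]
  simp only [add_re, mul_re, ofReal_re, ofReal_im, I_re, I_im]
  ring

theorem sqrt_two_div_two_mul_cosh_le_stripBarrier_re {z : ℂ} (hz : z.im ∈ Icc 0 Real.pi) :
    √2 / 2 * Real.cosh (z.re / 2) ≤ (stripBarrier z).re := by
  rw [stripBarrier_re, mul_comm, ← Real.cos_pi_div_four]
  have := Real.pi_pos
  refine mul_le_mul_of_nonneg_left ?_ (Real.cosh_pos _).le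
  rw [← Real.cos_abs ((z.im - Real.pi / 2) / 2)]
  exact Real.cos_le_cos_of_nonneg_of_le_pi (abs_nonneg _) (by linarith)
    (abs_le.2 ⟨by linarith [hz.1], by linarith [hz.2]⟩)

theorem stripBarrier_re_pos {z : ℂ} (hz : z.im ∈ Icc 0 Real.pi) : 0 < (stripBarrier z).re :=
  lt_of_lt_of_le (by positivity [Real.cosh_pos (z.re / 2)])
    (sqrt_two_div_two_mul_cosh_le_stripBarrier_re hz)

section Strip

variable {H : ℂ → ℂ} {M C : ℝ}

theorem re_sub_mul_stripBarrier_le_of_mem_frontier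
    (hM : ∀ z ∈ im ⁻¹' Icc 0 Real.pi, (H z).re ≤ M)
    (h₀ : ∀ z : ℂ, z.im = 0 → (H z).re ≤ C) (hπ : ∀ z : ℂ, z.im = Real.pi → (H z).re ≤ C)
    {δ R : ℝ} (hδ : 0 ≤ δ) (hR : 0 < R) (hMR : M - C ≤ δ * (√2 / 2 * Real.cosh (R / 2)))
    {w : ℂ} (hw : w ∈ frontier (Ioo (-R) R ×ℂ Ioo 0 Real.pi)) :
    (H w).re - δ * (stripBarrier w).re ≤ C := by
  have hπ0 := Real.pi_pos
  rw [frontier_reProdIm, closure_Ioo (neg_lt_self hR).ne, frontier_Ioo (neg_lt_self hR),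
    closure_Ioo hπ0.ne, frontier_Ioo hπ0] at hw
  rcases hw with ⟨-, hw_im⟩ | ⟨hw_re, hw_im⟩
  · rw [mem_preimage, mem_insert_iff, mem_singleton_iff] at hw_im
    have him : w.im ∈ Icc 0 Real.pi := by rcases hw_im with h | h <;> simp [h, hπ0.le]
    have hw : (H w).re ≤ C := hw_im.elim (h₀ w) (hπ w)
    nlinarith [stripBarrier_re_pos him]
  · rw [mem_preimage, mem_insert_iff, mem_singleton_iff] at hw_re
    have hcosh : Real.cosh (w.re / 2) = Real.cosh (R / 2) := by
      rcases hw_re with h | h <;> simp [h, neg_div]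
    have := mul_le_mul_of_nonneg_left (sqrt_two_div_two_mul_cosh_le_stripBarrier_re hw_im) hδ
    rw [hcosh] at this
    linarith [hM w hw_im]

theorem HarmonicOnSet.re_le_add_stripBarrier (hH : HarmonicOnSet H (im ⁻¹' Ioo 0 Real.pi))
    (hc : ContinuousOn H (im ⁻¹' Icc 0 Real.pi)) (hM : ∀ z ∈ im ⁻¹' Icc 0 Real.pi, (H z).re ≤ M)
    (h₀ : ∀ z : ℂ, z.im = 0 → (H z).re ≤ C) (hπ : ∀ z : ℂ, z.im = Real.pi → (H z).re ≤ C)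
    {δ : ℝ} (hδ : 0 < δ) {z : ℂ} (hz : z.im ∈ Icc 0 Real.pi) :
    (H z).re ≤ C + δ * (stripBarrier z).re := by
  obtain ⟨R, hzR, hMR⟩ : ∃ R, |z.re| < R ∧ M - C ≤ δ * (√2 / 2 * Real.cosh (R / 2)) :=
    ((eventually_gt_atTop _).and ((((Real.tendsto_cosh_atTop.comp
      (tendsto_id.atTop_div_const two_pos)).const_mul_atTop (by positivity)).const_mul_atTop
        hδ).eventually_ge_atTop _)).exists
  have hR : 0 < R := (abs_nonneg _).trans_lt hzR
  set V := Ioo (-R) R ×ℂ Ioo 0 Real.pi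
  have hV : IsOpen V := isOpen_Ioo.reProdIm isOpen_Ioo
  have hV_closure : closure V = Icc (-R) R ×ℂ Icc 0 Real.pi := by
    rw [closure_reProdIm, closure_Ioo (neg_lt_self hR).ne, closure_Ioo Real.pi_pos.ne]
  have hV_strip : closure V ⊆ im ⁻¹' Icc 0 Real.pi := hV_closure ▸ fun w hw => hw.2
  have hzV : z ∈ closure V := hV_closure ▸ ⟨abs_le.1 hzR.le, hz⟩
  have key : (H z - δ * stripBarrier z).re ≤ C :=
    HarmonicOnSet.re_le_of_forall_mem_frontier_re_le
      ((hH.mono hV fun w hw => hw.2).sub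
        ((differentiable_stripBarrier.const_mul (δ : ℂ)).differentiableOn.harmonicOnSet hV))
      ((Metric.isBounded_Ioo _ _).reProdIm (Metric.isBounded_Ioo _ _))
      ((hc.mono hV_strip).sub
        (continuous_const.mul differentiable_stripBarrier.continuous).continuousOn)
      (fun w hw => by
        simpa using re_sub_mul_stripBarrier_le_of_mem_frontier hM h₀ hπ hδ.le hR hMR hw) hzV
  simp only [sub_re, re_ofReal_mul] at key
  linarith

theorem HarmonicOnSet.re_le_horizontal_strip (hH : HarmonicOnSet H (im ⁻¹' Ioo 0 Real.pi))
    (hc : ContinuousOn H (im ⁻¹' Icc 0 Real.pi)) (hM : ∀ z ∈ im ⁻¹' Icc 0 Real.pi, (H z).re ≤ M)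
    (h₀ : ∀ z : ℂ, z.im = 0 → (H z).re ≤ C) (hπ : ∀ z : ℂ, z.im = Real.pi → (H z).re ≤ C)
    {z : ℂ} (hz : z.im ∈ Icc 0 Real.pi) : (H z).re ≤ C := by
  refine le_of_forall_pos_le_add fun η hη => ?_
  have hφ := stripBarrier_re_pos hz
  calc (H z).re ≤ C + η / (stripBarrier z).re * (stripBarrier z).re :=
        hH.re_le_add_stripBarrier hc hM h₀ hπ (div_pos hη hφ) hz
    _ = C + η := by rw [div_mul_cancel₀ _ hφ.ne']

end Strip

theorem strip_harmonic_almost_period_general (F : ℂ → ℂ) (ε τ : ℝ)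
    (hbd : ∃ M : ℝ, ∀ z ∈ {z : ℂ | z.im ∈ Set.Icc 0 Real.pi}, ‖F z‖ ≤ M)
    (hcont : ContinuousOn F {z : ℂ | z.im ∈ Set.Icc 0 Real.pi})
    (hharm : HarmonicOnSet F {z : ℂ | 0 < z.im ∧ z.im < Real.pi})
    (h₁ : ∀ x : ℝ, ‖F (x + τ) - F x‖ < ε)
    (h₂ : ∀ x : ℝ, ‖F (x + τ + Real.pi * Complex.I)
      - F (x + Real.pi * Complex.I)‖ < ε) :
    ∀ z ∈ {z : ℂ | z.im ∈ Set.Icc 0 Real.pi}, ‖F (z + τ) - F z‖ ≤ ε := by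
  obtain ⟨M, hM⟩ := hbd
  intro z hz
  have hτ : MapsTo (· + (τ : ℂ)) (im ⁻¹' Icc 0 Real.pi) (im ⁻¹' Icc 0 Real.pi) :=
    fun w hw => by simpa using hw
  have hharm_τ : HarmonicOnSet (fun w => F (w + τ)) (im ⁻¹' Ioo 0 Real.pi) :=
    (hharm.comp_add_const τ).mono (isOpen_Ioo.preimage continuous_im) fun w hw => by simpa using hw
  obtain ⟨c, hc, hcz⟩ := exists_norm_eq_mul_self (F (z + τ) - F z)
  have hle : ∀ w, (c * (F (w + τ) - F w)).re ≤ ‖F (w + τ) - F w‖ := fun w =>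
    (re_le_norm _).trans (by rw [norm_mul, hc, one_mul])
  have hz' : (c * (F (z + τ) - F z)).re = ‖F (z + τ) - F z‖ := by rw [← hcz, ofReal_re]
  rw [← hz']
  refine HarmonicOnSet.re_le_horizontal_strip (M := M + M) ((hharm_τ.sub hharm).const_mul c)
    (continuousOn_const.mul ((hcont.comp (continuous_add_const _).continuousOn hτ).sub hcont))
    (fun w hw => (hle w).trans ((norm_sub_le _ _).trans (add_le_add (hM _ (hτ hw)) (hM w hw))))
    (fun w hw => ?_) (fun w hw => ?_) hz
  · rw [← re_add_im w, hw]
    simpa using ((hle _).trans (h₁ w.re).le)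
  · rw [← re_add_im w, hw]
    refine (hle _).trans ?_
    rw [add_right_comm]
    exact (h₂ w.re).le

theorem strip_harmonic_almost_period (F : ℂ → ℂ) (ε τ : ℝ)
    (hbd : ∃ M : ℝ, ∀ z ∈ {z : ℂ | z.im ∈ Set.Icc 0 Real.pi}, ‖F z‖ ≤ M)
    (hcont : ContinuousOn F {z : ℂ | z.im ∈ Set.Icc 0 Real.pi})
    (hharm : HarmonicOnSet F {z : ℂ | 0 < z.im ∧ z.im < Real.pi})
    (hε : 0 < ε)
    (h₁ : ∀ x : ℝ, ‖F (x + τ) - F x‖ < ε)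
    (h₂ : ∀ x : ℝ, ‖F (x + τ + Real.pi * Complex.I)
      - F (x + Real.pi * Complex.I)‖ < ε) :
    ∀ z ∈ {z : ℂ | z.im ∈ Set.Icc 0 Real.pi}, ‖F (z + τ) - F z‖ ≤ ε :=
  strip_harmonic_almost_period_general F ε τ hbd hcont hharm h₁ h₂
end

section
/- Let λ ∈ ℝ and define h(x) = exp(iλ ln(Arg((2i − eˣ)/(2i + eˣ)))) for x real and sufficiently negative. Then Arg((2i − eˣ)/(2i + eˣ)) = (4eˣ)/(4 − e^{2x}) + O(e^{3x}) as x → −∞, and consequently h(x) − e^{iλx} → 0 as x → −∞. -/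
open Complex Filter Asymptotics

/-!
Writing t = eˣ, the quotient (2i − t)/(2i + t) = ((4 − t²) + 4ti)/(4 + t²) has positive real part
for t² < 4, so its argument is arctan(4t/(4 − t²)), and |arctan u − u| ≤ |u|³ gives the O(t³)
error as t → 0. In particular Arg ~ t, so ln Arg − x = ln (Arg / eˣ) → 0, and
|e^{ia} − e^{ib}| ≤ |a − b| turns this into h(x) − e^{iλx} → 0.
-/

theorem Complex.arg_eq_arctan_of_re_pos {z : ℂ} (hz : 0 < z.re) :
    arg z = Real.arctan (z.im / z.re) := by
  rw [← tan_arg, Real.arctan_tan (neg_pi_div_two_lt_arg_iff.2 (Or.inl hz))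
    (arg_lt_pi_div_two_iff.2 (Or.inl hz))]

theorem Real.abs_arctan_sub_self_le_of_nonneg {u : ℝ} (hu : 0 ≤ u) :
    |Real.arctan u - u| ≤ u ^ 3 := by
  have hderiv : ∀ y ∈ Set.Ico 0 u, ‖1 / (1 + y ^ 2) - 1‖ ≤ u ^ 2 := by
    intro y hy
    have hy2 : 1 / (1 + y ^ 2) - 1 = -(y ^ 2 / (1 + y ^ 2)) := by field_simp; ring
    rw [hy2, norm_neg, Real.norm_of_nonneg (by positivity)]
    calc y ^ 2 / (1 + y ^ 2) ≤ y ^ 2 := div_le_self (sq_nonneg y) (by nlinarith)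
      _ ≤ u ^ 2 := pow_le_pow_left₀ hy.1 hy.2.le 2
  have := norm_image_sub_le_of_norm_deriv_le_segment' (f := fun y => Real.arctan y - y)
    (fun y _ => ((Real.hasDerivAt_arctan y).sub (hasDerivAt_id y)).hasDerivWithinAt)
    hderiv u (Set.right_mem_Icc.2 hu)
  simpa [Real.norm_eq_abs, abs_of_nonneg hu, pow_succ] using this

theorem Real.abs_arctan_sub_self_le (u : ℝ) : |Real.arctan u - u| ≤ |u| ^ 3 := by
  rcases le_total 0 u with hu | hu
  · simpa [abs_of_nonneg hu] using Real.abs_arctan_sub_self_le_of_nonneg hu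
  · have := Real.abs_arctan_sub_self_le_of_nonneg (neg_nonneg.2 hu)
    rwa [Real.arctan_neg, neg_sub_neg, abs_sub_comm, ← abs_of_nonpos hu] at this

theorem two_I_sub_div_two_I_add_eq (t : ℝ) :
    (2 * I - t) / (2 * I + t) = ((4 - t ^ 2 : ℝ) + (4 * t : ℝ) * I) / (4 + t ^ 2 : ℝ) := by
  have hden : 2 * I + t ≠ 0 := fun h => by simpa using congrArg im h
  have h4 : ((4 + t ^ 2 : ℝ) : ℂ) ≠ 0 := ofReal_ne_zero.2 (by positivity)
  rw [div_eq_div_iff hden h4]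
  push_cast
  linear_combination (-8 * t : ℂ) * I_sq

theorem arg_two_I_sub_div_two_I_add {t : ℝ} (ht : t ^ 2 < 4) :
    arg ((2 * I - t) / (2 * I + t)) = Real.arctan (4 * t / (4 - t ^ 2)) := by
  have hre : ((2 * I - t) / (2 * I + t)).re = (4 - t ^ 2) / (4 + t ^ 2) := by
    rw [two_I_sub_div_two_I_add_eq, div_ofReal_re]; simp [-ofReal_pow]
  have him : ((2 * I - t) / (2 * I + t)).im = 4 * t / (4 + t ^ 2) := by
    rw [two_I_sub_div_two_I_add_eq, div_ofReal_im]; simp [-ofReal_pow]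
  rw [arg_eq_arctan_of_re_pos (by rw [hre]; exact div_pos (by linarith) (by positivity)),
    hre, him, div_div_div_cancel_right₀ (by positivity)]

theorem eventually_sq_lt_one_nhds_zero : ∀ᶠ t : ℝ in nhds 0, t ^ 2 < 1 := by
  filter_upwards [Ioo_mem_nhds (show (-1 : ℝ) < 0 by norm_num) one_pos] with t ht
  nlinarith [ht.1, ht.2]

theorem isBigO_arg_two_I_sub_div_two_I_add_sub :
    (fun t : ℝ => arg ((2 * I - t) / (2 * I + t)) - 4 * t / (4 - t ^ 2))
      =O[nhds 0] fun t => t ^ 3 := by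
  refine IsBigO.of_bound 8 ?_
  filter_upwards [eventually_sq_lt_one_nhds_zero] with t ht
  have hu : |4 * t / (4 - t ^ 2)| ≤ 2 * |t| := by
    rw [abs_div, abs_of_pos (by linarith : 0 < 4 - t ^ 2), div_le_iff₀ (by linarith), abs_mul,
      abs_of_pos four_pos]
    nlinarith [abs_nonneg t]
  rw [arg_two_I_sub_div_two_I_add (by linarith), Real.norm_eq_abs, Real.norm_eq_abs, abs_pow]
  calc _ ≤ |4 * t / (4 - t ^ 2)| ^ 3 := Real.abs_arctan_sub_self_le _
    _ ≤ (2 * |t|) ^ 3 := pow_le_pow_left₀ (abs_nonneg _) hu 3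
    _ = 8 * |t| ^ 3 := by ring

theorem isEquivalent_arg_two_I_sub_div_two_I_add :
    (fun t : ℝ => arg ((2 * I - t) / (2 * I + t))) ~[nhds 0] fun t => t := by
  have hrat : (fun t : ℝ => 4 * t / (4 - t ^ 2) - t) =O[nhds 0] fun t => t ^ 3 := by
    refine IsBigO.of_bound 1 ?_
    filter_upwards [eventually_sq_lt_one_nhds_zero] with t ht
    have hsub : 4 * t / (4 - t ^ 2) - t = t ^ 3 / (4 - t ^ 2) := by
      field_simp [(by linarith : 4 - t ^ 2 ≠ 0)]; ring
    rw [hsub, one_mul, norm_div, Real.norm_of_nonneg (by linarith : 0 ≤ 4 - t ^ 2)]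
    exact div_le_self (norm_nonneg _) (by linarith)
  have hcube : (fun t : ℝ => t ^ 3) =o[nhds 0] fun t => t := by
    simpa only [pow_one] using isLittleO_pow_pow (𝕜 := ℝ) (m := 1) (n := 3) (by norm_num)
  refine IsLittleO.isEquivalent <|
    ((isBigO_arg_two_I_sub_div_two_I_add_sub.add hrat).trans_isLittleO hcube).congr_left
      fun t => by simp only [Pi.sub_apply]; ring

theorem Asymptotics.IsEquivalent.tendsto_log_sub_log {α : Type*} {l : Filter α} {f g : α → ℝ}
    (h : f ~[l] g) (hg : ∀ᶠ x in l, g x ≠ 0) :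
    Tendsto (fun x => Real.log (f x) - Real.log (g x)) l (nhds 0) := by
  have hratio : Tendsto (f / g) l (nhds 1) := (isEquivalent_iff_tendsto_one hg).1 h
  have hf : ∀ᶠ x in l, f x ≠ 0 := (hratio.eventually_ne one_ne_zero).mp <|
    hg.mono fun x _ hx hfx => hx (by simp [hfx])
  have hlog := (Real.continuousAt_log one_ne_zero).tendsto.comp hratio
  rw [Real.log_one] at hlog
  refine hlog.congr' ?_
  filter_upwards [hf, hg] with x hfx hgx
  exact Real.log_div hfx hgx

theorem Complex.norm_exp_I_mul_sub_exp_I_mul_le (a b : ℝ) :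
    ‖cexp (I * a) - cexp (I * b)‖ ≤ |a - b| := by
  have hsplit : cexp (I * a) - cexp (I * b) = cexp (I * b) * (cexp (I * ↑(a - b)) - 1) := by
    rw [mul_sub, ← Complex.exp_add]; push_cast; ring_nf
  rw [hsplit, norm_mul, norm_exp_I_mul_ofReal, one_mul]
  exact Real.norm_exp_I_mul_ofReal_sub_one_le

theorem tendsto_cexp_I_mul_sub_cexp_I_mul {α : Type*} {l : Filter α} {f g : α → ℝ} (lam : ℝ)
    (h : Tendsto (fun x => f x - g x) l (nhds 0)) :
    Tendsto (fun x => cexp (I * lam * f x) - cexp (I * lam * g x)) l (nhds 0) := by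
  refine squeeze_zero_norm (fun x => ?_) (by simpa using (h.const_mul lam).abs)
  simpa only [ofReal_mul, mul_assoc, ← mul_sub, abs_mul] using
    norm_exp_I_mul_sub_exp_I_mul_le (lam * f x) (lam * g x)

theorem arg_asymptotic_atBot (lam : ℝ) :
    (fun x : ℝ => Complex.arg ((2 * Complex.I - Real.exp x) / (2 * Complex.I + Real.exp x))
        - 4 * Real.exp x / (4 - Real.exp (2 * x)))
      =O[atBot] (fun x : ℝ => Real.exp (3 * x)) ∧
    Filter.Tendsto
      (fun x : ℝ => Complex.exp (Complex.I * lam *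
          Real.log (Complex.arg ((2 * Complex.I - Real.exp x) / (2 * Complex.I + Real.exp x))))
        - Complex.exp (Complex.I * lam * x))
      atBot (nhds 0) := by
  refine ⟨?_, ?_⟩
  · simpa only [Function.comp_def, ← Real.exp_nat_mul, Nat.cast_ofNat] using
      isBigO_arg_two_I_sub_div_two_I_add_sub.comp_tendsto Real.tendsto_exp_atBot
  · have hlog := (isEquivalent_arg_two_I_sub_div_two_I_add.comp_tendsto
      Real.tendsto_exp_atBot).tendsto_log_sub_log (.of_forall fun x => (Real.exp_pos x).ne')
    simp only [Function.comp_apply, Real.log_exp] at hlog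
    exact tendsto_cexp_I_mul_sub_cexp_I_mul lam hlog
end

section
/- Let f₁ and f₂ be continuous almost periodic functions on ℝ. For every ε > 0 there exists l(ε) > 0 such that every interval [t₀, t₀ + l(ε)] ⊂ ℝ contains a common ε-almost-period τ of f₁ and f₂, i.e. both sup_x |f₁(x+τ) − f₁(x)| < ε and sup_x |f₂(x+τ) − f₂(x)| < ε. -/
/-!
Bochner's criterion. Continuity and relatively dense almost periods make `f` uniformly
continuous, and then every translate of `f` is uniformly close to a translate by a point of a
fixed compact interval, so the set of translates is totally bounded for uniform convergence.
The translates of `x ↦ (f₁ x, f₂ x)` lie in the product of the two sets of translates, hence are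
totally bounded too. Conversely, if the translates by the points of a finite set `S ⊆ [-r, r]`
form an `ε`-net, the translate by `t₀ + r` is `ε`-close to the one by some `s ∈ S`, and then
`t₀ + r - s ∈ [t₀, t₀ + 2r]` is an `ε`-almost period.
-/

def BohrAlmostPeriodic (f : ℝ → ℂ) : Prop :=
  Continuous f ∧ ∀ ε > 0, ∃ l > 0, ∀ t₀ : ℝ, ∃ τ ∈ Set.Icc t₀ (t₀ + l),
    ∀ t : ℝ, ‖f (t + τ) - f t‖ < ε

open Set Filter Uniformity UniformFun
open scoped UniformConvergence

theorem TotallyBounded.prod {α β : Type*} [UniformSpace α] [UniformSpace β] {s : Set α}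
    {t : Set β} (hs : TotallyBounded s) (ht : TotallyBounded t) : TotallyBounded (s ×ˢ t) := by
  rw [totallyBounded_iff_ultrafilter] at hs ht ⊢
  intro f hf
  have hfst := hs (f.map Prod.fst) ((tendsto_principal_principal.2 fun _ hp => hp.1).mono_left hf)
  have hsnd := ht (f.map Prod.snd) ((tendsto_principal_principal.2 fun _ hp => hp.2).mono_left hf)
  exact (hfst.prod hsnd).mono le_prod_map_fst_snd

theorem UniformFun.hasBasis_uniformity_dist {α E : Type*} [PseudoMetricSpace E] :
    (𝓤 (α →ᵤ E)).HasBasis (fun ε : ℝ => 0 < ε)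
      fun ε => {p | ∀ x, dist (toFun p.1 x) (toFun p.2 x) < ε} :=
  UniformFun.hasBasis_uniformity_of_basis α E Metric.uniformity_basis_dist

def translates {α : Type*} (f : ℝ → α) : Set (ℝ →ᵤ α) :=
  range fun t => ofFun fun x => f (x + t)

theorem totallyBounded_translates_prodMk {α β : Type*} [UniformSpace α] [UniformSpace β]
    {f : ℝ → α} {g : ℝ → β} (hf : TotallyBounded (translates f))
    (hg : TotallyBounded (translates g)) : TotallyBounded (translates fun x => (f x, g x)) := by
  refine ((hf.prod hg).image UniformFun.uniformEquivProdArrow.symm.uniformContinuous).subset ?_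
  rintro _ ⟨t, rfl⟩
  exact ⟨(ofFun _, ofFun _), ⟨⟨t, rfl⟩, ⟨t, rfl⟩⟩, rfl⟩

section AlmostPeriods

variable {E : Type*} [PseudoMetricSpace E]

def IsAlmostPeriod (f : ℝ → E) (ε τ : ℝ) : Prop :=
  ∀ x, dist (f (x + τ)) (f x) < ε

def HasRelativelyDenseAlmostPeriods (f : ℝ → E) : Prop :=
  ∀ ε > 0, ∃ l > 0, ∀ t₀, ∃ τ ∈ Icc t₀ (t₀ + l), IsAlmostPeriod f ε τ

theorem isAlmostPeriod_prodMk_iff {F : Type*} [PseudoMetricSpace F] {f : ℝ → E} {g : ℝ → F}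
    {ε τ : ℝ} :
    IsAlmostPeriod (fun x => (f x, g x)) ε τ ↔ IsAlmostPeriod f ε τ ∧ IsAlmostPeriod g ε τ := by
  simp only [IsAlmostPeriod, Prod.dist_eq, max_lt_iff, forall_and]

theorem HasRelativelyDenseAlmostPeriods.uniformContinuous {f : ℝ → E} (hf : Continuous f)
    (hap : HasRelativelyDenseAlmostPeriods f) : UniformContinuous f := by
  rw [Metric.uniformContinuous_iff]
  intro ε hε
  obtain ⟨l, -, hl⟩ := hap (ε / 3) (by positivity)
  obtain ⟨δ, hδ, hK⟩ := Metric.uniformContinuousOn_iff.1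
    (isCompact_Icc.uniformContinuousOn_of_continuous (s := Icc (-1) (l + 1)) hf.continuousOn)
      (ε / 3) (by positivity)
  refine ⟨min δ 1, by positivity, fun {a b} hab => ?_⟩
  rw [Real.dist_eq, lt_min_iff, abs_lt, abs_lt] at hab
  obtain ⟨⟨hδ₁, hδ₂⟩, h₁, h₂⟩ := hab
  -- shifting by an almost period moves `a` and `b` into `[-1, l + 1]`
  obtain ⟨τ, ⟨hτ₁, hτ₂⟩, hτ⟩ := hl (-a)
  have hshift : dist (f (a + τ)) (f (b + τ)) < ε / 3 :=
    hK _ ⟨by linarith, by linarith⟩ _ ⟨by linarith, by linarith⟩ <| by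
      rw [Real.dist_eq, add_sub_add_right_eq_sub, abs_lt]; constructor <;> linarith
  calc dist (f a) (f b) ≤ dist (f a) (f (a + τ)) + dist (f (a + τ)) (f (b + τ))
          + dist (f (b + τ)) (f b) := dist_triangle4 _ _ _ _
    _ < ε / 3 + ε / 3 + ε / 3 := by gcongr; exacts [dist_comm (f a) _ ▸ hτ a, hτ b]
    _ = ε := by ring

theorem HasRelativelyDenseAlmostPeriods.totallyBounded_translates {f : ℝ → E}
    (hf : Continuous f) (hap : HasRelativelyDenseAlmostPeriods f) :
    TotallyBounded (translates f) := by
  rw [UniformFun.hasBasis_uniformity_dist.totallyBounded_iff]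
  intro ε hε
  obtain ⟨δ, hδ, hfδ⟩ := Metric.uniformContinuous_iff.1 (hap.uniformContinuous hf) (ε / 2)
    (by positivity)
  obtain ⟨l, -, hl⟩ := hap (ε / 2) (by positivity)
  obtain ⟨S, -, hS, hcover⟩ := isCompact_Icc.finite_cover_balls (s := Icc 0 l) hδ
  refine ⟨(fun s => ofFun fun x => f (x + s)) '' S, hS.image _, ?_⟩
  rintro _ ⟨t, rfl⟩
  obtain ⟨τ, ⟨hτ₁, hτ₂⟩, hτ⟩ := hl (-t)
  obtain ⟨s, hs, hts⟩ := mem_iUnion₂.1 (hcover ⟨by linarith, by linarith⟩ : t + τ ∈ _)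
  simp only [biUnion_image, mem_iUnion₂]
  refine ⟨s, hs, fun x => ?_⟩
  calc dist (f (x + t)) (f (x + s))
      ≤ dist (f (x + t)) (f (x + t + τ)) + dist (f (x + t + τ)) (f (x + s)) := dist_triangle _ _ _
    _ < ε / 2 + ε / 2 := by
      gcongr
      · exact dist_comm (f (x + t)) _ ▸ hτ (x + t)
      · refine hfδ ?_
        rwa [add_assoc, Real.dist_eq, add_sub_add_left_eq_sub, ← Real.dist_eq]
    _ = ε := by ring

theorem TotallyBounded.hasRelativelyDenseAlmostPeriods {f : ℝ → E}
    (h : TotallyBounded (translates f)) : HasRelativelyDenseAlmostPeriods f := by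
  intro ε hε
  obtain ⟨T, hT, hT_fin, hcover⟩ :=
    h.exists_subset (UniformFun.hasBasis_uniformity_dist.mem_of_mem hε)
  rw [translates, ← image_univ] at hT
  obtain ⟨S, -, hS, rfl⟩ := (exists_subset_image_finite_and (p := (T = ·))).1 ⟨T, hT, hT_fin, rfl⟩
  obtain ⟨r, hr, hSr⟩ := hS.isBounded.subset_closedBall_lt 0 0
  refine ⟨2 * r, by positivity, fun t₀ => ?_⟩
  obtain ⟨s, hs, hclose⟩ : ∃ s ∈ S, ∀ x, dist (f (x + (t₀ + r))) (f (x + s)) < ε := by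
    simpa only [biUnion_image, mem_iUnion₂, exists_prop, mem_ofPred_eq, toFun_ofFun]
      using hcover ⟨t₀ + r, rfl⟩
  have hsr : |s| ≤ r := by simpa using hSr hs
  refine ⟨t₀ + r - s, ⟨by linarith [le_abs_self s], by linarith [neg_abs_le s]⟩, fun x => ?_⟩
  convert hclose (x - s) using 3 <;> ring

end AlmostPeriods

theorem BohrAlmostPeriodic.hasRelativelyDenseAlmostPeriods {f : ℝ → ℂ}
    (h : BohrAlmostPeriodic f) : HasRelativelyDenseAlmostPeriods f := by
  simpa only [HasRelativelyDenseAlmostPeriods, IsAlmostPeriod, dist_eq_norm] using h.2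

theorem BohrAlmostPeriodic.totallyBounded_translates {f : ℝ → ℂ} (h : BohrAlmostPeriodic f) :
    TotallyBounded (translates f) :=
  h.hasRelativelyDenseAlmostPeriods.totallyBounded_translates h.1

theorem common_almost_periods (f₁ f₂ : ℝ → ℂ)
    (h₁ : BohrAlmostPeriodic f₁) (h₂ : BohrAlmostPeriodic f₂) :
    ∀ ε > 0, ∃ l > 0, ∀ t₀ : ℝ, ∃ τ ∈ Set.Icc t₀ (t₀ + l),
      (∀ x : ℝ, ‖f₁ (x + τ) - f₁ x‖ < ε) ∧
      (∀ x : ℝ, ‖f₂ (x + τ) - f₂ x‖ < ε) := by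
  intro ε hε
  obtain ⟨l, hl, hτ⟩ := (totallyBounded_translates_prodMk h₁.totallyBounded_translates
    h₂.totallyBounded_translates).hasRelativelyDenseAlmostPeriods ε hε
  refine ⟨l, hl, fun t₀ => ?_⟩
  obtain ⟨τ, hτ_mem, hτ_ap⟩ := hτ t₀
  rw [isAlmostPeriod_prodMk_iff] at hτ_ap
  refine ⟨τ, hτ_mem, ?_⟩
  simpa only [IsAlmostPeriod, dist_eq_norm] using hτ_ap
end
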